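/- arXiv:1504.08015 — 3 statements merged into one kernel-verified Lean document; each statement's English description precedes it below -/
import Mathlib

section
/- Discrete Sobolev inequality for step functions (Lemma 3.3). Let L > 0, ε = L/N for some N ∈ ℕ, and let f : ℝ → ℝ be an L-periodic step function constant on each interval [iε, (i+1)ε). Then sup_x |f(x)|² ≤ (1/L + 1) ∫₀ᴸ |f(x)|² dx + (1/2) ∫₀ᴸ |D⁺_ε f(x)|² dx; in particular ‖f‖_∞² ≤ (1/L + 1) ‖f‖²_{H¹_ε}, where ‖f‖²_{H¹_ε} = ∫₀ᴸ (|f|² + |D⁺_ε f|²) dx. -/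
/-!
Write `a i = f (iε)`. The integrals are Riemann sums, `∫ f² = ε ∑ aᵢ²` and
`∫ (D⁺_ε f)² = ε ∑ ((aᵢ₊₁ - aᵢ)/ε)²`, so the claim is a statement about the `N`-periodic
sequence `a`. Going around the cycle both ways from `aₖ²` to `aⱼ²` bounds
`aⱼ² - aₖ²` by half the total variation of `a²`; averaging over `k` turns `aₖ²` into the mean
`(1/L) ∫ f²`. Finally `|aᵢ₊₁² - aᵢ²| = ε |Δᵢ| |aᵢ₊₁ + aᵢ|` with `Δᵢ = (aᵢ₊₁ - aᵢ)/ε`, and AM-GM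
bounds it by `(ε/2) Δᵢ² + ε (aᵢ² + aᵢ₊₁²)`.
-/

open MeasureTheory Set

noncomputable section

/-- Forward discrete derivative `(D⁺_ε f)(x) = (f(x+ε) - f(x))/ε`. -/
def Dplus (ε : ℝ) (f : ℝ → ℝ) : ℝ → ℝ := fun x => (f (x + ε) - f x) / ε

section Discrete

open Finset

theorem two_mul_dist_le_sum_dist_of_cycle {α : Type*} [PseudoMetricSpace α] (g : ℕ → α)
    {N j k : ℕ} (hg : g N = g 0) (hj : j ≤ N) (hk : k ≤ N) :
    2 * dist (g j) (g k) ≤ ∑ i ∈ range N, dist (g i) (g (i + 1)) := by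
  wlog hjk : j ≤ k generalizing j k
  · rw [dist_comm]
    exact this hk hj (le_of_not_ge hjk)
  have hsplit : ∑ i ∈ range N, dist (g i) (g (i + 1)) = ∑ i ∈ Ico 0 j, dist (g i) (g (i + 1))
      + ∑ i ∈ Ico j k, dist (g i) (g (i + 1)) + ∑ i ∈ Ico k N, dist (g i) (g (i + 1)) := by
    rw [sum_Ico_consecutive _ (Nat.zero_le j) hjk, sum_Ico_consecutive _ (Nat.zero_le k) hk,
      range_eq_Ico]
  have hinner := dist_le_Ico_sum_dist g hjk
  have hleft := dist_le_Ico_sum_dist g (Nat.zero_le j)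
  have hright := dist_le_Ico_sum_dist g hk
  have houter : dist (g j) (g k) ≤ dist (g 0) (g j) + dist (g k) (g N) := by
    rw [hg, dist_comm (g k), dist_comm (g 0)]
    exact dist_triangle _ _ _
  linarith

theorem le_average_add_half_sum_abs_sub {N : ℕ} (hN : N ≠ 0) (g : ℕ → ℝ) (hg : g N = g 0)
    {j : ℕ} (hj : j ≤ N) :
    g j ≤ (∑ i ∈ range N, g i) / N + (∑ i ∈ range N, |g i - g (i + 1)|) / 2 := by
  set V := ∑ i ∈ range N, |g i - g (i + 1)|
  have hN' : (N : ℝ) ≠ 0 := Nat.cast_ne_zero.mpr hN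
  have hcycle : ∀ k ∈ range N, g j ≤ g k + V / 2 := fun k hk => by
    have h := two_mul_dist_le_sum_dist_of_cycle g hg hj (mem_range.mp hk).le
    simp only [Real.dist_eq] at h
    linarith [le_abs_self (g j - g k)]
  calc g j = (∑ _k ∈ range N, g j) / N := by
        rw [sum_const, card_range, nsmul_eq_mul, mul_div_cancel_left₀ _ hN']
    _ ≤ (∑ k ∈ range N, (g k + V / 2)) / N := by gcongr with k hk; exact hcycle k hk
    _ = (∑ i ∈ range N, g i) / N + V / 2 := by
        rw [sum_add_distrib, sum_const, card_range, nsmul_eq_mul, add_div,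
          mul_div_cancel_left₀ _ hN']

theorem abs_sq_sub_sq_le {ε : ℝ} (hε : 0 < ε) (u v : ℝ) :
    |u ^ 2 - v ^ 2| ≤ ε / 2 * ((v - u) / ε) ^ 2 + ε * (u ^ 2 + v ^ 2) := by
  set d := (v - u) / ε
  have hvu : v - u = ε * d := by simp only [d]; field_simp
  have hsq : u ^ 2 - v ^ 2 = -(ε * d * (u + v)) := by linear_combination -(u + v) * hvu
  rw [hsq, abs_neg, abs_le]
  constructor <;>
    nlinarith [mul_nonneg hε.le (sq_nonneg (d + u + v)), mul_nonneg hε.le (sq_nonneg (d - u - v)),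
      mul_nonneg hε.le (sq_nonneg (u - v))]

theorem sq_le_discrete_sobolev {N : ℕ} (hN : N ≠ 0) {ε : ℝ} (hε : 0 < ε) (a : ℕ → ℝ)
    (ha : a N = a 0) {j : ℕ} (hj : j ≤ N) :
    a j ^ 2 ≤ (1 / (N * ε) + 1) * (ε * ∑ i ∈ range N, a i ^ 2)
      + 1 / 4 * (ε * ∑ i ∈ range N, ((a (i + 1) - a i) / ε) ^ 2) := by
  set S := ∑ i ∈ range N, a i ^ 2
  set D := ∑ i ∈ range N, ((a (i + 1) - a i) / ε) ^ 2
  have hshift : ∑ i ∈ range N, a (i + 1) ^ 2 = S := by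
    have h₁ := sum_range_succ' (fun i => a i ^ 2) N
    have h₂ := sum_range_succ (fun i => a i ^ 2) N
    rw [ha] at h₂
    linarith
  have hvar : ∑ i ∈ range N, |a i ^ 2 - a (i + 1) ^ 2| ≤ ε / 2 * D + 2 * ε * S :=
    calc ∑ i ∈ range N, |a i ^ 2 - a (i + 1) ^ 2|
        ≤ ∑ i ∈ range N, (ε / 2 * ((a (i + 1) - a i) / ε) ^ 2
            + ε * (a i ^ 2 + a (i + 1) ^ 2)) :=
          sum_le_sum fun i _ => abs_sq_sub_sq_le hε _ _
      _ = ε / 2 * D + 2 * ε * S := by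
          rw [sum_add_distrib, ← mul_sum, ← mul_sum, sum_add_distrib, hshift]
          ring
  have hmean := le_average_add_half_sum_abs_sub hN (fun i => a i ^ 2) (by simp only [ha]) hj
  have hN' : (N : ℝ) ≠ 0 := Nat.cast_ne_zero.mpr hN
  calc a j ^ 2 ≤ S / N + (ε / 4 * D + ε * S) := by linarith
    _ = (1 / (N * ε) + 1) * (ε * S) + 1 / 4 * (ε * D) := by field_simp; ring

end Discrete

def HasStepValues (ε : ℝ) (g : ℝ → ℝ) (c : ℕ → ℝ) : Prop :=
  ∀ i : ℕ, ∀ x ∈ Ico (i * ε) ((i + 1) * ε), g x = c i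

namespace HasStepValues

variable {ε : ℝ} {g h : ℝ → ℝ} {c d : ℕ → ℝ}

theorem add (hg : HasStepValues ε g c) (hh : HasStepValues ε h d) :
    HasStepValues ε (fun x => g x + h x) (fun i => c i + d i) := fun i x hx => by
  simp only [hg i x hx, hh i x hx]

theorem pow (hg : HasStepValues ε g c) (n : ℕ) :
    HasStepValues ε (fun x => g x ^ n) (fun i => c i ^ n) := fun i x hx => by
  simp only [hg i x hx]

theorem dplus (hg : HasStepValues ε g c) :
    HasStepValues ε (Dplus ε g) (fun i => (c (i + 1) - c i) / ε) := fun i x hx => by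
  have hshift : x + ε ∈ Ico (((i + 1 : ℕ) : ℝ) * ε) (((i + 1 : ℕ) + 1) * ε) := by
    push_cast
    constructor <;> linarith [hx.1, hx.2]
  simp only [Dplus, hg i x hx, hg (i + 1) _ hshift]

theorem intervalIntegrable_cell (hε : 0 ≤ ε) (hg : HasStepValues ε g c) (i : ℕ) :
    IntervalIntegrable g volume (i * ε) ((i + 1) * ε) := by
  refine (intervalIntegrable_congr_uIoo (g := fun _ => c i) fun x hx => ?_).mpr
    intervalIntegrable_const
  rw [uIoo_of_le (by nlinarith)] at hx
  exact hg i x (Ioo_subset_Ico_self hx)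

theorem integral_cell (hε : 0 ≤ ε) (hg : HasStepValues ε g c) (i : ℕ) :
    ∫ x in (i * ε)..((i + 1) * ε), g x = ε * c i := by
  rw [intervalIntegral.integral_congr_Ioo_of_le (by nlinarith)
    fun x hx => hg i x (Ioo_subset_Ico_self hx)]
  simp only [intervalIntegral.integral_const, smul_eq_mul]
  ring

theorem integral_eq (hε : 0 ≤ ε) (hg : HasStepValues ε g c) (N : ℕ) :
    ∫ x in (0 : ℝ)..(N * ε), g x = ε * ∑ i ∈ Finset.range N, c i := by
  have hcells := intervalIntegral.sum_integral_adjacent_intervals (μ := volume) (f := g)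
    (a := fun k : ℕ => (k : ℝ) * ε) (n := N) fun k _ => by
      simpa only [Nat.cast_succ] using hg.intervalIntegrable_cell hε k
  simp only [Nat.cast_zero, zero_mul, Nat.cast_succ] at hcells
  rw [← hcells, Finset.mul_sum]
  exact Finset.sum_congr rfl fun i _ => hg.integral_cell hε i

theorem exists_eq_of_periodic {N : ℕ} (hN : N ≠ 0) (hε : 0 < ε) (hg : HasStepValues ε g c)
    (hper : Function.Periodic g (N * ε)) (x : ℝ) : ∃ j < N, g x = c j := by
  have hp : 0 < (N : ℝ) * ε := mul_pos (Nat.cast_pos.mpr (Nat.pos_of_ne_zero hN)) hε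
  have hgy : g (toIcoMod hp 0 x) = g x := by
    rw [← self_sub_toIcoDiv_zsmul]
    exact hper.sub_zsmul_eq _
  obtain ⟨hy₀, hyN⟩ := toIcoMod_mem_Ico hp 0 x
  rw [zero_add] at hyN
  set y := toIcoMod hp 0 x
  refine ⟨⌊y / ε⌋₊, ?_, ?_⟩
  · exact (Nat.floor_lt (div_nonneg hy₀ hε.le)).mpr ((div_lt_iff₀ hε).mpr hyN)
  · rw [← hgy]
    exact hg _ y ⟨(le_div_iff₀ hε).mp (Nat.floor_le (div_nonneg hy₀ hε.le)),
      (div_lt_iff₀ hε).mp (Nat.lt_floor_add_one _)⟩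

end HasStepValues

/-- **Discrete Sobolev inequality for step functions (Lemma 3.3).**
Let `ε = L/N` and let `f` be an `L`-periodic step function, constant on each interval
`[iε, (i+1)ε)`.  Then `sup_x |f(x)|² ≤ (1/L + 1) ∫₀ᴸ |f|² + (1/2) ∫₀ᴸ |D⁺_ε f|²`; in particular
`‖f‖_∞² ≤ (1/L + 1) ‖f‖²_{H¹_ε}` where `‖f‖²_{H¹_ε} = ∫₀ᴸ (|f|² + |D⁺_ε f|²)`. -/
theorem discrete_sobolev
    (L : ℝ) (hL : 0 < L) (N : ℕ) (hN : N ≠ 0) (ε : ℝ) (hε : ε = L / N)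
    (f : ℝ → ℝ)
    -- `f` is `L`-periodic
    (hper : ∀ x : ℝ, f (x + L) = f x)
    -- `f` is a step function, constant on each interval `[iε, (i+1)ε)`
    (hstep : ∀ i : ℤ, ∀ x ∈ Ico ((i : ℝ) * ε) (((i : ℝ) + 1) * ε), f x = f ((i : ℝ) * ε)) :
    (∀ x : ℝ, f x ^ 2 ≤ (1 / L + 1) * (∫ y in (0 : ℝ)..L, f y ^ 2)
        + (1 / 2) * ∫ y in (0 : ℝ)..L, (Dplus ε f y) ^ 2) ∧
    (∀ x : ℝ, f x ^ 2 ≤ (1 / L + 1) * ∫ y in (0 : ℝ)..L, (f y ^ 2 + (Dplus ε f y) ^ 2)) := by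
  have hε₀ : 0 < ε := hε ▸ div_pos hL (Nat.cast_pos.mpr (Nat.pos_of_ne_zero hN))
  have hL' : L = N * ε := by rw [hε]; field_simp
  have hf : HasStepValues ε f (fun i => f (i * ε)) := fun i x hx => by
    exact_mod_cast hstep i x (by exact_mod_cast hx)
  have hf2 := hf.pow 2
  have hD2 := hf.dplus.pow 2
  have hpoint : ∀ x, f x ^ 2 ≤ (1 / L + 1) * (∫ y in (0 : ℝ)..L, f y ^ 2)
      + 1 / 4 * ∫ y in (0 : ℝ)..L, (Dplus ε f y) ^ 2 := fun x => by
    obtain ⟨j, hj, hfx⟩ := hf.exists_eq_of_periodic hN hε₀ (hL' ▸ hper) x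
    have hcycle : f (N * ε) = f ((0 : ℕ) * ε) := by
      rw [← hL', Nat.cast_zero, zero_mul, ← zero_add L, hper]
    rw [hfx, hL', hf2.integral_eq hε₀.le, hD2.integral_eq hε₀.le]
    exact sq_le_discrete_sobolev hN hε₀ (fun i : ℕ => f (i * ε)) hcycle hj.le
  have hsum : ∫ y in (0 : ℝ)..L, (f y ^ 2 + (Dplus ε f y) ^ 2)
      = (∫ y in (0 : ℝ)..L, f y ^ 2) + ∫ y in (0 : ℝ)..L, (Dplus ε f y) ^ 2 := by
    rw [hL', (hf2.add hD2).integral_eq hε₀.le, hf2.integral_eq hε₀.le, hD2.integral_eq hε₀.le,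
      Finset.sum_add_distrib, mul_add]
  have hJ : 0 ≤ ∫ y in (0 : ℝ)..L, (Dplus ε f y) ^ 2 :=
    intervalIntegral.integral_nonneg hL.le fun _ _ => sq_nonneg _
  have hL₀ : 0 < 1 / L := one_div_pos.mpr hL
  refine ⟨fun x => by linarith [hpoint x], fun x => ?_⟩
  rw [hsum]
  nlinarith [hpoint x, mul_nonneg hL₀.le hJ]

end
end

section
/- Finite range of the interaction coefficients K^p. With the coefficients K^p_{i,j} on the periodic lattice ℤ/N defined by K¹_{i,j} = ε⁻² if j = i±1 (mod N), 0 otherwise, and the recursion K^ℓ_{i,j} = ε⁻² [ K^{ℓ−1}_{i,j−1} + K^{ℓ−1}_{i,j+1} − 2 K^{ℓ−1}_{i,j} − (δ_{i+1,j} + δ_{i−1,j}) Σ_{j'} K^{ℓ−1}_{i,j'} ]: for every p ≥ 1, K^p_{i,j} = 0 whenever the circular distance d(i,j) = min_{k ∈ ℤ} |i − j + kN| satisfies d(i,j) > p. -/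
/-
Each step of the recursion only couples `K^{ℓ-1}_{i,·}` at sites `j - 1`, `j`, `j + 1`, and
the Kronecker terms only act at `j = i ± 1`; so by induction on `ℓ` the support of `K^ℓ_{i,·}`
stays within circular distance `ℓ` of `i`. The circular distance `d(i,j)` is the least `|z|` over
integers `z` lifting `i - j`, which gives the triangle inequality at once.
-/

open Finset

noncomputable section

/-- The interaction coefficients `K^p_{i,j}` on the periodic lattice `ℤ/N`:
`K¹_{i,j} = ε⁻²` if `j = i ± 1 (mod N)` and `0` otherwise, and for `ℓ > 1`
`K^ℓ_{i,j} = ε⁻² [K^{ℓ-1}_{i,j-1} + K^{ℓ-1}_{i,j+1} - 2K^{ℓ-1}_{i,j}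
  - (δ_{i+1,j} + δ_{i-1,j}) Σ_{j'} K^{ℓ-1}_{i,j'}]`. -/
def Kcoef (ε : ℝ) (N : ℕ) [NeZero N] : ℕ → ZMod N → ZMod N → ℝ
  | 0 => fun _ _ => 0
  | 1 => fun i j => if j = i + 1 ∨ j = i - 1 then 1 / ε ^ 2 else 0
  | (ℓ + 2) => fun i j =>
      (1 / ε ^ 2) *
        (Kcoef ε N (ℓ + 1) i (j - 1) + Kcoef ε N (ℓ + 1) i (j + 1)
          - 2 * Kcoef ε N (ℓ + 1) i j
          - ((if j = i + 1 then (1 : ℝ) else 0) + (if j = i - 1 then (1 : ℝ) else 0))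
              * ∑ j' : ZMod N, Kcoef ε N (ℓ + 1) i j')

/-- The circular distance on the lattice `ℤ/N`: `d(i,j) = min_{k ∈ ℤ} |i - j + kN|`. -/
def circDist (N : ℕ) (i j : ZMod N) : ℕ :=
  sInf {m : ℕ | ∃ k : ℤ, (m : ℤ) = |(ZMod.val i : ℤ) - (ZMod.val j : ℤ) + k * N|}

section CircDist

variable {N : ℕ} [NeZero N] {i j : ZMod N}

lemma exists_natAbs_eq_of_intCast_eq_sub {z : ℤ} (hz : (z : ZMod N) = i - j) :
    ∃ k : ℤ, (z.natAbs : ℤ) = |(ZMod.val i : ℤ) - (ZMod.val j : ℤ) + k * N| := by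
  have hdvd : (N : ℤ) ∣ z - ((ZMod.val i : ℤ) - (ZMod.val j : ℤ)) := by
    rw [← ZMod.intCast_zmod_eq_zero_iff_dvd]
    push_cast
    simp only [ZMod.natCast_val, ZMod.cast_id', id, hz, sub_self]
  obtain ⟨k, hk⟩ := hdvd
  exact ⟨k, by rw [Int.natCast_natAbs]; congr 1; linarith⟩

lemma circDist_le_natAbs {z : ℤ} (hz : (z : ZMod N) = i - j) : circDist N i j ≤ z.natAbs :=
  Nat.sInf_le (exists_natAbs_eq_of_intCast_eq_sub hz)

lemma exists_intCast_eq_sub_natAbs_eq_circDist :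
    ∃ z : ℤ, (z : ZMod N) = i - j ∧ z.natAbs = circDist N i j := by
  have hne : {m : ℕ | ∃ k : ℤ,
      (m : ℤ) = |(ZMod.val i : ℤ) - (ZMod.val j : ℤ) + k * N|}.Nonempty :=
    ⟨_, exists_natAbs_eq_of_intCast_eq_sub (z := (i - j : ZMod N).val) (by simp)⟩
  obtain ⟨k, hk⟩ := Nat.sInf_mem hne
  refine ⟨(ZMod.val i : ℤ) - (ZMod.val j : ℤ) + k * N, by simp, ?_⟩
  rw [← Int.natCast_inj, Int.natCast_natAbs, circDist, hk]

lemma circDist_triangle (i j k : ZMod N) : circDist N i k ≤ circDist N i j + circDist N j k := by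
  obtain ⟨z₁, hz₁, hd₁⟩ := exists_intCast_eq_sub_natAbs_eq_circDist (i := i) (j := j)
  obtain ⟨z₂, hz₂, hd₂⟩ := exists_intCast_eq_sub_natAbs_eq_circDist (i := j) (j := k)
  rw [← hd₁, ← hd₂]
  calc circDist N i k ≤ (z₁ + z₂).natAbs :=
        circDist_le_natAbs (by push_cast; rw [hz₁, hz₂]; ring)
    _ ≤ z₁.natAbs + z₂.natAbs := Int.natAbs_add_le z₁ z₂

lemma circDist_le_one (h : j = i + 1 ∨ j = i - 1) : circDist N i j ≤ 1 := by
  rcases h with rfl | rfl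
  · exact circDist_le_natAbs (z := -1) (by simp : ((-1 : ℤ) : ZMod N) = i - (i + 1))
  · exact circDist_le_natAbs (z := 1) (by simp : ((1 : ℤ) : ZMod N) = i - (i - 1))

end CircDist

lemma Kcoef_eq_zero_of_lt_circDist (ε : ℝ) {N : ℕ} [NeZero N] :
    ∀ (p : ℕ) (i j : ZMod N), p < circDist N i j → Kcoef ε N p i j = 0
  | 0, _, _, _ => rfl
  | 1, i, j, hd => if_neg fun h => (circDist_le_one h).not_gt hd
  | ℓ + 2, i, j, hd => by
    have hnear : ∀ {j'}, j' = j + 1 ∨ j' = j - 1 → Kcoef ε N (ℓ + 1) i j' = 0 :=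
      fun {j'} h' =>
      Kcoef_eq_zero_of_lt_circDist ε (ℓ + 1) i j' <| by
        have := circDist_triangle i j' j
        have := circDist_le_one (i := j') (j := j) <|
          h'.symm.imp (by rintro rfl; ring) (by rintro rfl; ring)
        omega
    have hδ : ∀ {j'}, j' = i + 1 ∨ j' = i - 1 → j ≠ j' := by
      rintro _ h' rfl
      exact (circDist_le_one h').not_gt (by omega)
    simp only [Kcoef, hnear (.inl rfl), hnear (.inr rfl),
      Kcoef_eq_zero_of_lt_circDist ε (ℓ + 1) i j (by omega),
      if_neg (hδ (.inl rfl)), if_neg (hδ (.inr rfl))]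
    ring

theorem Kcoef_finite_range_general
    (ε : ℝ) (N : ℕ) [NeZero N]
    (p : ℕ) (i j : ZMod N) (hd : p < circDist N i j) :
    Kcoef ε N p i j = 0 :=
  Kcoef_eq_zero_of_lt_circDist ε p i j hd

/-- **Finite range of the interaction coefficients `K^p`.**
For every `p ≥ 1`, `K^p_{i,j} = 0` whenever the circular distance `d(i,j)` exceeds `p`. -/
theorem Kcoef_finite_range
    (ε : ℝ) (hε : 0 < ε) (N : ℕ) [NeZero N]
    (p : ℕ) (hp : 1 ≤ p) (i j : ZMod N) (hd : p < circDist N i j) :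
    Kcoef ε N p i j = 0 :=
  Kcoef_finite_range_general ε N p i j hd

end
end

section
/- Translation invariance and symmetry of the interaction coefficients K^p. With the coefficients K^p_{i,j} on the periodic lattice ℤ/N defined by K¹_{i,j} = ε⁻² if j = i±1 (mod N), 0 otherwise, and the recursion K^ℓ_{i,j} = ε⁻² [ K^{ℓ−1}_{i,j−1} + K^{ℓ−1}_{i,j+1} − 2 K^{ℓ−1}_{i,j} − (δ_{i+1,j} + δ_{i−1,j}) Σ_{j'} K^{ℓ−1}_{i,j'} ]: for every p ≥ 1, K^p_{i,j} depends only on i − j mod N (i.e. K^p_{i+k,j+k} = K^p_{i,j} for all k), and K^p_{i,j} = K^p_{j,i} for all i, j (action–reaction symmetry). -/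
/-!
Translations `x ↦ x + k` and the reflection `x ↦ -x` are symmetries of the cycle `ℤ/N`: they
preserve the relation `j = i ± 1` (the reflection swaps `+1` and `-1`), and they permute the
index set, so they also preserve the row sums in the recursion. Induction on `p` therefore gives
`K(i + k, j + k) = K(i, j)` and `K(-i, -j) = K(i, j)`, and composing the two with the shift
`k = i + j` gives `K(i, j) = K(-j + (i + j), -i + (i + j)) = K(j, i)`.
-/

open Finset

noncomputable section

theorem neg_add_eq_neg_sub {G : Type*} [AddCommGroup G] (a b : G) : -a + b = -(a - b) := by
  abel

section

variable {ε : ℝ} {N : ℕ} [NeZero N]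

theorem Kcoef_add_add :
    ∀ (p : ℕ) (i j k : ZMod N), Kcoef ε N p (i + k) (j + k) = Kcoef ε N p i j
  | 0, _, _, _ => rfl
  | 1, i, j, k => by simp only [Kcoef, add_right_comm _ k, add_sub_right_comm _ k, add_left_inj]
  | ℓ + 2, i, j, k => by
      have row_sum : ∑ j', Kcoef ε N (ℓ + 1) (i + k) j' = ∑ j', Kcoef ε N (ℓ + 1) i j' :=
        (Fintype.sum_equiv (Equiv.addRight k) _ _
          fun j' => (Kcoef_add_add (ℓ + 1) i j' k).symm).symm
      simp only [Kcoef, add_right_comm _ k, add_sub_right_comm _ k, Kcoef_add_add, row_sum,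
        add_left_inj]

theorem Kcoef_neg_neg : ∀ (p : ℕ) (i j : ZMod N), Kcoef ε N p (-i) (-j) = Kcoef ε N p i j
  | 0, _, _ => rfl
  | 1, i, j => by simp only [Kcoef, ← neg_add', neg_add_eq_neg_sub, neg_inj, or_comm]
  | ℓ + 2, i, j => by
      have row_sum : ∑ j', Kcoef ε N (ℓ + 1) (-i) j' = ∑ j', Kcoef ε N (ℓ + 1) i j' :=
        (Fintype.sum_equiv (Equiv.neg _) _ _ fun j' => (Kcoef_neg_neg (ℓ + 1) i j').symm).symm
      simp only [Kcoef, ← neg_add', neg_add_eq_neg_sub, neg_inj, Kcoef_neg_neg, row_sum]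
      ring

theorem Kcoef_comm (p : ℕ) (i j : ZMod N) : Kcoef ε N p i j = Kcoef ε N p j i := by
  have h := Kcoef_add_add (ε := ε) p (-j) (-i) (i + j)
  rwa [Kcoef_neg_neg, neg_add_cancel_left, add_comm i j, neg_add_cancel_left] at h

end

theorem Kcoef_translation_invariance_and_symmetry_general
    (ε : ℝ) (N : ℕ) [NeZero N] (p : ℕ) :
    (∀ i j k : ZMod N, Kcoef ε N p (i + k) (j + k) = Kcoef ε N p i j) ∧
    (∀ i j : ZMod N, Kcoef ε N p i j = Kcoef ε N p j i) :=
  ⟨Kcoef_add_add p, Kcoef_comm p⟩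

/-- **Translation invariance and symmetry of the interaction coefficients `K^p`.**
For every `p ≥ 1`, `K^p_{i,j}` depends only on `i - j (mod N)`, i.e.
`K^p_{i+k, j+k} = K^p_{i,j}` for every `k`, and `K^p_{i,j} = K^p_{j,i}`
(action–reaction symmetry). -/
theorem Kcoef_translation_invariance_and_symmetry
    (ε : ℝ) (hε : 0 < ε) (N : ℕ) [NeZero N] (p : ℕ) (hp : 1 ≤ p) :
    (∀ i j k : ZMod N, Kcoef ε N p (i + k) (j + k) = Kcoef ε N p i j) ∧
    (∀ i j : ZMod N, Kcoef ε N p i j = Kcoef ε N p j i) :=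
  Kcoef_translation_invariance_and_symmetry_general ε N p

end
end
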